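/- For a, b > 0, μ > -1/2, β such that 2μ + β + 1 > 0, and nonnegative integers n ≥ k, the two-variable Fourier transform of g(t,x) = (1-tanh²x)^a exp(-e^t/2 + (b+k)t) L_{n-k}^{2k+2μ+β}(e^t) C_k^{(μ)}(tanh x) equals ∫∫ e^{-iξ₁x - iξ₂t} g(t,x) dx dt = [2^{2a+b+k-iξ₂-1} (2k+2μ+β+1)_{n-k} (2μ)_k / (k! (n-k)!)] Γ(b+k-iξ₂) ₂F₁(-n+k, b+k-iξ₂; 2k+2μ+β+1; 2) B(a+iξ₁/2, a-iξ₁/2) ₃F₂(-k, k+2μ, a+iξ₁/2; μ+1/2, 2a; 1). -/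

import Mathlib

open MeasureTheory

/-- Pochhammer symbol (rising factorial) for a complex argument. -/
noncomputable def poch (z : ℂ) (k : ℕ) : ℂ := ∏ j ∈ Finset.range k, (z + j)

/-- Beta function for complex arguments with positive real parts. -/
noncomputable def betaC (p q : ℂ) : ℂ :=
  Complex.Gamma p * Complex.Gamma q / Complex.Gamma (p + q)

/-- Terminating Gauss hypergeometric sum ₂F₁(-n, b; c; z). -/
noncomputable def F21 (n : ℕ) (b c z : ℂ) : ℂ :=
  ∑ j ∈ Finset.range (n + 1),
    poch (-(n : ℂ)) j * poch b j / (poch c j * (j.factorial : ℂ)) * z ^ j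

/-- Terminating generalized hypergeometric sum ₃F₂(-n, b, c; d, e; 1). -/
noncomputable def F32 (n : ℕ) (b c d e : ℂ) : ℂ :=
  ∑ j ∈ Finset.range (n + 1),
    poch (-(n : ℂ)) j * poch b j * poch c j /
      (poch d j * poch e j * (j.factorial : ℂ))

/-- Gegenbauer polynomial C_k^{(μ)}(x). -/
noncomputable def geg (k : ℕ) (μ x : ℂ) : ℂ :=
  poch (2 * μ) k / (k.factorial : ℂ) * F21 k ((k : ℂ) + 2 * μ) (μ + 1 / 2) ((1 - x) / 2)

/-- Laguerre polynomial L_n^{(α)}(u). -/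
noncomputable def lag (n : ℕ) (α u : ℂ) : ℂ :=
  poch (α + 1) n / (n.factorial : ℂ) *
    ∑ j ∈ Finset.range (n + 1),
      poch (-(n : ℂ)) j / (poch (α + 1) j * (j.factorial : ℂ)) * u ^ j

/-- Jacobi polynomial P_n^{(α,γ)}(t). -/
noncomputable def jac (n : ℕ) (α γ t : ℂ) : ℂ :=
  poch (α + 1) n / (n.factorial : ℂ) * F21 n ((n : ℂ) + α + γ + 1) (α + 1) ((1 - t) / 2)

/-- Continuous Hahn polynomial p_k(x; A, B, C, D). -/
noncomputable def hahn (k : ℕ) (x A B C D : ℂ) : ℂ :=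
  Complex.I ^ k * poch (A + C) k * poch (A + D) k / (k.factorial : ℂ) *
    F32 k ((k : ℂ) + A + B + C + D - 1) (A + Complex.I * x) (A + C) (A + D)

open Set

lemma poch_succ (z : ℂ) (k : ℕ) : poch z (k+1) = poch z k * (z + k) := by
  simp [poch, Finset.prod_range_succ]

lemma gamma_shift {z : ℂ} (hz : 0 < z.re) (j : ℕ) :
    Complex.Gamma (z + j) = Complex.Gamma z * poch z j := by
  induction j with
  | zero => simp [poch]
  | succ j ih =>
      have hne : z + j ≠ 0 := by
        intro h
        have : (z + j).re = 0 := by rw [h]; simp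
        simp only [Complex.add_re, Complex.natCast_re] at this
        have : (0:ℝ) ≤ (j:ℝ) := by positivity
        nlinarith [hz]
      have : ((j:ℂ) + 1) = ((j+1 : ℕ) : ℂ) := by push_cast; ring
      rw [poch_succ, show z + ((j+1:ℕ):ℂ) = (z + j) + 1 by push_cast; ring,
        Complex.Gamma_add_one _ hne, ih]
      ring

lemma Gamma_ne_zero_of_re_pos {z : ℂ} (hz : 0 < z.re) : Complex.Gamma z ≠ 0 := by
  apply Complex.Gamma_ne_zero
  intro m h
  rw [h] at hz
  simp only [Complex.neg_re, Complex.natCast_re] at hz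
  have : (0:ℝ) ≤ (m:ℝ) := by positivity
  linarith

lemma poch_ne_zero {z : ℂ} (hz : 0 < z.re) (j : ℕ) : poch z j ≠ 0 := by
  induction j with
  | zero => simp [poch]
  | succ j ih =>
      rw [poch_succ]
      refine mul_ne_zero ih ?_
      intro h
      have : (z + j).re = 0 := by rw [h]; simp
      simp only [Complex.add_re, Complex.natCast_re] at this
      have : (0:ℝ) ≤ (j:ℝ) := by positivity
      nlinarith [hz]

noncomputable def gT (w : ℂ) : ℝ → ℂ :=
  fun x => (x:ℂ) ^ (w - 1) * Complex.exp (-((1/2 : ℝ) * x))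

lemma gT_integrableOn (hw : 0 < w.re) : IntegrableOn (gT w) (Ioi 0) := by
  have h0 : IntegrableOn (fun x : ℝ => ((Real.exp (-x) : ℝ) : ℂ) * (x:ℂ) ^ (w-1)) (Ioi 0) :=
    Complex.GammaIntegral_convergent hw
  have h1 : IntegrableOn (fun x : ℝ => ((Real.exp (-((1/2)*x)) : ℝ) : ℂ) *
      ((((1/2)*x : ℝ)):ℂ) ^ (w-1)) (Ioi 0) := by
    have := (integrableOn_Ioi_comp_mul_left_iff
      (fun x : ℝ => ((Real.exp (-x) : ℝ) : ℂ) * (x:ℂ) ^ (w-1)) 0 (by norm_num : (0:ℝ) < 1/2)).mpr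
    simpa using this (by simpa using h0)
  have h2 := h1.const_mul ((((2:ℝ)):ℂ) ^ (w-1))
  apply IntegrableOn.congr_fun h2 ?_ measurableSet_Ioi
  intro x hx
  rw [mem_Ioi] at hx
  have hsplit : ((1/2*x : ℝ):ℂ) ^ (w-1) = ((1/2:ℝ):ℂ) ^ (w-1) * (x:ℂ) ^ (w-1) := by
    rw [Complex.ofReal_mul]
    exact Complex.mul_cpow_ofReal_nonneg (by norm_num) hx.le _
  have h3 : (((2:ℝ)):ℂ) ^ (w-1) * (((1/2:ℝ)):ℂ) ^ (w-1) = 1 := by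
    rw [← Complex.mul_cpow_ofReal_nonneg (by norm_num) (by norm_num)]
    norm_num
  have h4 : (↑(Real.exp (-(1/2*x))) : ℂ) = Complex.exp (-((1/2:ℝ) * x)) := by
    push_cast [Complex.ofReal_exp]
    norm_num
  show ((2:ℝ):ℂ) ^ (w-1) * (↑(Real.exp (-(1/2*x))) * ((1/2*x:ℝ):ℂ) ^ (w-1)) = gT w x
  rw [hsplit, h4]
  unfold gT
  rw [show ((2:ℝ):ℂ)^(w-1) * (Complex.exp (-((1/2:ℝ) * x)) * (((1/2:ℝ):ℂ)^(w-1) * (x:ℂ)^(w-1)))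
    = (((2:ℝ):ℂ)^(w-1) * ((1/2:ℝ):ℂ)^(w-1)) * ((x:ℂ)^(w-1) * Complex.exp (-((1/2:ℝ) * x)))
    from by ring, h3, one_mul]

lemma gT_pointwise (w : ℂ) (t : ℝ) :
    |Real.exp t| • gT w (Real.exp t) = Complex.exp (w * t - Real.exp t / 2) := by
  rw [abs_of_pos (Real.exp_pos t)]
  unfold gT
  rw [Complex.real_smul]
  have hb : ((Real.exp t : ℝ) : ℂ) = Complex.exp (t:ℂ) := by
    rw [Complex.ofReal_exp]
  rw [hb, Complex.cpow_def_of_ne_zero (Complex.exp_ne_zero _),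
    Complex.log_exp (by simp [Real.pi_pos]) (by simp [Real.pi_pos.le])]
  rw [← Complex.exp_add, ← Complex.exp_add]
  congr 1
  push_cast
  ring


section T
variable {w : ℂ}
lemma exp_image_deriv : ∀ x ∈ (univ : Set ℝ), HasDerivWithinAt Real.exp (Real.exp x) univ x :=
  fun x _ => (Real.hasDerivAt_exp x).hasDerivWithinAt

lemma exp_image : Real.exp '' univ = Ioi 0 := by
  rw [image_univ, Real.range_exp]


lemma integrable_exp_gamma (hw : 0 < w.re) :
    Integrable (fun t : ℝ => Complex.exp (w * t - Real.exp t / 2)) := by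
  have h := (integrableOn_image_iff_integrableOn_abs_deriv_smul MeasurableSet.univ
    exp_image_deriv Real.exp_injective.injOn (gT w)).mp
  rw [exp_image] at h
  have h2 := h (gT_integrableOn hw)
  rw [integrableOn_univ] at h2
  exact h2.congr (Filter.Eventually.of_forall fun t => gT_pointwise w t)

lemma integral_exp_gamma (hw : 0 < w.re) :
    ∫ t : ℝ, Complex.exp (w * t - Real.exp t / 2) = 2 ^ w * Complex.Gamma w := by
  have h := integral_image_eq_integral_abs_deriv_smul MeasurableSet.univ
    exp_image_deriv Real.exp_injective.injOn (gT w)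
  rw [exp_image, MeasureTheory.setIntegral_univ] at h
  have h2 : ∫ x : ℝ in Ioi 0, gT w x = 2 ^ w * Complex.Gamma w := by
    have := Complex.integral_cpow_mul_exp_neg_mul_Ioi hw (by norm_num : (0:ℝ) < 1/2)
    rw [show (1/((1/2:ℝ):ℂ)) = 2 by norm_num] at this
    rw [← this]
    rfl
  rw [← h2, h]
  exact (MeasureTheory.integral_congr_ae
    (Filter.Eventually.of_forall fun t => gT_pointwise w t)).symm
end T

lemma t_side (bk : ℝ) (hbk : 0 < bk) (ξ₂ : ℝ) (m : ℕ) (A : ℂ) :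
    ∫ t : ℝ, Complex.exp (-(Complex.I * ξ₂ * t)) *
        ((Real.exp (-(Real.exp t) / 2 + bk * t) : ℝ) : ℂ) * lag m A (Real.exp t)
      = 2 ^ ((bk:ℂ) - Complex.I * ξ₂) * Complex.Gamma ((bk:ℂ) - Complex.I * ξ₂) *
        (poch (A + 1) m / (m.factorial : ℂ)) *
        F21 m ((bk:ℂ) - Complex.I * ξ₂) (A + 1) 2 := by
  set c : ℂ := (bk:ℂ) - Complex.I * ξ₂ with hc
  have hcre : 0 < c.re := by simp [hc, Complex.sub_re, Complex.mul_re]; exact hbk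
  have hcj : ∀ j : ℕ, 0 < (c + j).re := by
    intro j
    simp only [Complex.add_re, Complex.natCast_re]
    have : (0:ℝ) ≤ (j:ℝ) := by positivity
    linarith
  -- pointwise expansion
  have key : ∀ t : ℝ,
      Complex.exp (-(Complex.I * ξ₂ * t)) *
        ((Real.exp (-(Real.exp t) / 2 + bk * t) : ℝ) : ℂ) * lag m A (Real.exp t)
      = ∑ j ∈ Finset.range (m + 1),
          (poch (A + 1) m / (m.factorial : ℂ) *
            (poch (-(m:ℂ)) j / (poch (A + 1) j * (j.factorial : ℂ)))) *
          Complex.exp ((c + j) * t - Real.exp t / 2) := by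
    intro t
    rw [lag, Finset.mul_sum, Finset.mul_sum]
    refine Finset.sum_congr rfl fun j _ => ?_
    have h1 : ((Real.exp t : ℝ) : ℂ) ^ j = Complex.exp ((j:ℂ) * t) := by
      rw [Complex.ofReal_exp, ← Complex.exp_nat_mul]
    have h2 : ((Real.exp (-(Real.exp t) / 2 + bk * t) : ℝ) : ℂ)
        = Complex.exp ((-(Real.exp t) / 2 + bk * t : ℝ) : ℂ) := Complex.ofReal_exp _
    rw [h1, h2]
    rw [show Complex.exp (-(Complex.I * ξ₂ * t)) *
        Complex.exp (((-(Real.exp t) / 2 + bk * t : ℝ)) : ℂ) *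
        (poch (A + 1) m / (m.factorial : ℂ) *
          (poch (-(m:ℂ)) j / (poch (A + 1) j * (j.factorial : ℂ)) * Complex.exp ((j:ℂ) * t)))
      = (poch (A + 1) m / (m.factorial : ℂ) *
          (poch (-(m:ℂ)) j / (poch (A + 1) j * (j.factorial : ℂ)))) *
        (Complex.exp (-(Complex.I * ξ₂ * t)) *
          Complex.exp (((-(Real.exp t) / 2 + bk * t : ℝ)) : ℂ) * Complex.exp ((j:ℂ) * t))
      from by ring]
    congr 1
    rw [← Complex.exp_add, ← Complex.exp_add]
    congr 1
    push_cast
    ring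
  rw [MeasureTheory.integral_congr_ae (Filter.Eventually.of_forall key)]
  rw [MeasureTheory.integral_finset_sum _ (fun j _ =>
    (integrable_exp_gamma (hcj j)).const_mul _)]
  have hval : ∀ j ∈ Finset.range (m+1),
      (∫ t : ℝ, (poch (A + 1) m / (m.factorial : ℂ) *
          (poch (-(m:ℂ)) j / (poch (A + 1) j * (j.factorial : ℂ)))) *
          Complex.exp ((c + j) * t - Real.exp t / 2))
      = (poch (A + 1) m / (m.factorial : ℂ) *
          (poch (-(m:ℂ)) j / (poch (A + 1) j * (j.factorial : ℂ)))) *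
        (2 ^ c * 2 ^ j * (Complex.Gamma c * poch c j)) := by
    intro j _
    rw [MeasureTheory.integral_const_mul, integral_exp_gamma (hcj j),
      ← gamma_shift hcre j]
    congr 2
    rw [← Complex.cpow_natCast 2 j, ← Complex.cpow_add _ _ (by norm_num : (2:ℂ) ≠ 0)]
  rw [Finset.sum_congr rfl hval]
  rw [F21, Finset.mul_sum]
  refine Finset.sum_congr rfl fun j _ => ?_
  ring

noncomputable def fV : ℝ → ℝ := fun x => (Real.exp (2*x) + 1)⁻¹
noncomputable def fV' : ℝ → ℝ := fun x => -(Real.exp (2*x) * 2) / (Real.exp (2*x) + 1)^2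

lemma fV_hasDeriv (x : ℝ) : HasDerivAt fV (fV' x) x := by
  have h1 : HasDerivAt (fun x : ℝ => Real.exp (2*x)) (Real.exp (2*x) * 2) x := by
    exact ((Real.hasDerivAt_exp (2*x)).comp x ((hasDerivAt_id x).const_mul 2)).congr_deriv (by simp)
  have h2 := (h1.add_const 1).inv (by positivity)
  exact h2

lemma fV_deriv_within : ∀ x ∈ (univ : Set ℝ), HasDerivWithinAt fV (fV' x) univ x :=
  fun x _ => (fV_hasDeriv x).hasDerivWithinAt

lemma fV_inj : InjOn fV univ := by
  intro x _ y _ h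
  simp only [fV] at h
  have hx : Real.exp (2*x) + 1 ≠ 0 := by positivity
  have hy : Real.exp (2*y) + 1 ≠ 0 := by positivity
  have h2 : Real.exp (2*x) + 1 = Real.exp (2*y) + 1 := (inv_inj.mp h).symm ▸ rfl
  have h3 := Real.exp_injective (by linarith : Real.exp (2*x) = Real.exp (2*y))
  linarith

lemma fV_image : fV '' univ = Ioo 0 1 := by
  ext v
  simp only [image_univ, mem_range, mem_Ioo]
  constructor
  · rintro ⟨x, rfl⟩
    have h : 0 < Real.exp (2*x) := Real.exp_pos _
    constructor
    · show 0 < (Real.exp (2*x) + 1)⁻¹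
      positivity
    · rw [fV, inv_lt_one_iff₀]
      right; linarith
  · rintro ⟨h0, h1⟩
    refine ⟨Real.log ((1-v)/v) / 2, ?_⟩
    have hpos : 0 < (1-v)/v := div_pos (by linarith) h0
    rw [fV, show 2 * (Real.log ((1-v)/v) / 2) = Real.log ((1-v)/v) by ring,
      Real.exp_log hpos]
    field_simp
    ring

noncomputable def gB (P q : ℂ) : ℝ → ℂ := fun v => (v:ℂ)^(P-1) * (1-(v:ℂ))^(q-1)

lemma ofReal_pos_eq_cexp {y : ℝ} (hy : 0 < y) :
    (y:ℂ) = Complex.exp ((Real.log y : ℝ) : ℂ) := by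
  rw [← Complex.ofReal_exp, Real.exp_log hy]

lemma cpow_pos_real {y : ℝ} (hy : 0 < y) (s : ℂ) :
    (y:ℂ) ^ s = Complex.exp (((Real.log y : ℝ) : ℂ) * s) := by
  rw [ofReal_pos_eq_cexp hy, Complex.cpow_def_of_ne_zero (Complex.exp_ne_zero _),
    Complex.log_exp (by simp [Real.pi_pos]) (by simp [Real.pi_pos.le])]

lemma npow_pos_real {y : ℝ} (hy : 0 < y) (j : ℕ) :
    (y:ℂ) ^ j = Complex.exp ((j:ℂ) * ((Real.log y : ℝ) : ℂ)) := by
  rw [ofReal_pos_eq_cexp hy, ← Complex.exp_nat_mul]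

lemma rpow_cast_cexp {y : ℝ} (hy : 0 < y) (a : ℝ) :
    ((y ^ a : ℝ) : ℂ) = Complex.exp (((Real.log y * a : ℝ)) : ℂ) := by
  rw [Real.rpow_def_of_pos hy, Complex.ofReal_exp]

lemma tanh_eq_aux (x : ℝ) : Real.tanh x = (Real.exp (2*x) - 1) / (Real.exp (2*x) + 1) := by
  rw [Real.tanh_eq_sinh_div_cosh, Real.sinh_eq, Real.cosh_eq]
  have h1 : Real.exp (2*x) = Real.exp x * Real.exp x := by
    rw [← Real.exp_add]; ring_nf
  have h2 : Real.exp (-x) = (Real.exp x)⁻¹ := Real.exp_neg x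
  have h3 : Real.exp x ≠ 0 := (Real.exp_pos x).ne'
  rw [h1, h2]
  field_simp

lemma x_term_eq (a ξ₁ : ℝ) (j : ℕ) (x : ℝ) :
    Complex.exp (-(Complex.I * ξ₁ * x)) * (((1 - Real.tanh x ^ 2) ^ a : ℝ) : ℂ) *
      ((1 - ((Real.tanh x : ℝ) : ℂ))/2)^j
    = (2:ℂ)^(2*(a:ℂ)-1) *
        (|fV' x| • gB ((a:ℂ) + Complex.I*ξ₁/2 + j) ((a:ℂ) - Complex.I*ξ₁/2) (fV x)) := by
  set E := Real.exp (2*x) with hE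
  have hEpos : 0 < E := Real.exp_pos _
  have hD : 0 < E + 1 := by linarith
  have hlE : Real.log E = 2*x := Real.log_exp _
  -- tanh facts
  have ht : Real.tanh x = (E - 1)/(E + 1) := tanh_eq_aux x
  have h2 : (1 - Real.tanh x)/2 = (E+1)⁻¹ := by rw [ht]; field_simp; ring
  have h3 : 1 - Real.tanh x ^ 2 = 4*E/(E+1)^2 := by rw [ht]; field_simp; ring
  have h4 : |fV' x| = E*2/(E+1)^2 := by
    rw [fV', ← hE, abs_div, abs_neg, abs_of_pos (by positivity), abs_of_pos (by positivity)]
  have h5 : fV x = (E+1)⁻¹ := rfl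
  have h6 : 1 - (E+1)⁻¹ = E/(E+1) := by field_simp; ring
  -- convert LHS factors
  have c1 : (((1 - Real.tanh x ^ 2) ^ a : ℝ) : ℂ)
      = Complex.exp (((Real.log (4*E/(E+1)^2) * a : ℝ)) : ℂ) := by
    rw [h3]; exact rpow_cast_cexp (by positivity) a
  have c2 : ((1 - ((Real.tanh x : ℝ) : ℂ))/2) = (((E+1)⁻¹ : ℝ) : ℂ) := by
    rw [← h2]; push_cast; ring
  have c2' : ((1 - ((Real.tanh x : ℝ) : ℂ))/2)^j
      = Complex.exp ((j:ℂ) * ((Real.log (E+1)⁻¹ : ℝ) : ℂ)) := by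
    rw [c2]; exact npow_pos_real (by positivity) j
  -- convert RHS factors
  have r1 : (2:ℂ)^(2*(a:ℂ)-1) = Complex.exp (((Real.log 2 : ℝ):ℂ) * (2*(a:ℂ)-1)) := by
    rw [show (2:ℂ) = ((2:ℝ):ℂ) by norm_num]
    exact cpow_pos_real (by norm_num) _
  have r2 : gB ((a:ℂ) + Complex.I*ξ₁/2 + j) ((a:ℂ) - Complex.I*ξ₁/2) (fV x)
      = Complex.exp (((Real.log (E+1)⁻¹ : ℝ):ℂ) * ((a:ℂ) + Complex.I*ξ₁/2 + j - 1)) *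
        Complex.exp (((Real.log (E/(E+1)) : ℝ):ℂ) * ((a:ℂ) - Complex.I*ξ₁/2 - 1)) := by
    rw [gB, h5]
    congr 1
    · exact cpow_pos_real (by positivity) _
    · rw [show 1 - (((E+1)⁻¹ : ℝ) : ℂ) = ((E/(E+1) : ℝ) : ℂ) by push_cast [h6.symm]; ring]
      exact cpow_pos_real (by positivity) _
  rw [c1, c2', r1, r2, h4, Complex.real_smul]
  rw [show ((E*2/(E+1)^2 : ℝ) : ℂ) = Complex.exp (((Real.log (E*2/(E+1)^2) : ℝ):ℂ) : ℂ)
    from ofReal_pos_eq_cexp (by positivity)]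
  rw [← Complex.exp_add, ← Complex.exp_add, ← Complex.exp_add, ← Complex.exp_add,
    ← Complex.exp_add]
  congr 1
  -- expand the logs
  have l1 : Real.log (4*E/(E+1)^2) = 2*Real.log 2 + 2*x - 2*Real.log (E+1) := by
    rw [Real.log_div (by positivity) (by positivity), Real.log_mul (by norm_num) hEpos.ne',
      Real.log_pow, hlE, show (4:ℝ) = 2^2 by norm_num, Real.log_pow]
    push_cast; ring
  have l2 : Real.log (E+1)⁻¹ = -Real.log (E+1) := Real.log_inv _
  have l3 : Real.log (E*2/(E+1)^2) = 2*x + Real.log 2 - 2*Real.log (E+1) := by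
    rw [Real.log_div (by positivity) (by positivity), Real.log_mul hEpos.ne' (by norm_num),
      Real.log_pow, hlE]
    push_cast; ring
  have l4 : Real.log (E/(E+1)) = 2*x - Real.log (E+1) := by
    rw [Real.log_div hEpos.ne' (by positivity), hlE]
  rw [l1, l2, l3, l4]
  push_cast
  ring

section X
variable {a : ℝ} (ξ₁ : ℝ) (j : ℕ)

lemma re_p (a ξ₁ : ℝ) : ((a:ℂ) + Complex.I*ξ₁/2).re = a := by
  simp [Complex.add_re, Complex.div_re]

lemma re_q (a ξ₁ : ℝ) : ((a:ℂ) - Complex.I*ξ₁/2).re = a := by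
  simp [Complex.sub_re, Complex.div_re]

lemma gB_integrableOn (ha : 0 < a) :
    IntegrableOn (gB ((a:ℂ) + Complex.I*ξ₁/2 + j) ((a:ℂ) - Complex.I*ξ₁/2)) (Ioo 0 1) := by
  have hu : 0 < ((a:ℂ) + Complex.I*ξ₁/2 + j).re := by
    rw [Complex.add_re, re_p, Complex.natCast_re]
    have : (0:ℝ) ≤ (j:ℝ) := by positivity
    linarith
  have hv : 0 < ((a:ℂ) - Complex.I*ξ₁/2).re := by rw [re_q]; exact ha
  have := Complex.betaIntegral_convergent hu hv
  rw [intervalIntegrable_iff_integrableOn_Ioo_of_le zero_le_one] at this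
  exact this

lemma x_term_integrable (ha : 0 < a) :
    Integrable (fun x : ℝ => Complex.exp (-(Complex.I * ξ₁ * x)) *
      (((1 - Real.tanh x ^ 2) ^ a : ℝ) : ℂ) * ((1 - ((Real.tanh x : ℝ) : ℂ))/2)^j) := by
  have h := (integrableOn_image_iff_integrableOn_abs_deriv_smul MeasurableSet.univ
    fV_deriv_within fV_inj
    (gB ((a:ℂ) + Complex.I*ξ₁/2 + j) ((a:ℂ) - Complex.I*ξ₁/2))).mp
  rw [fV_image] at h
  have h2 := h (gB_integrableOn ξ₁ j ha)
  rw [integrableOn_univ] at h2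
  have h3 := h2.const_mul ((2:ℂ)^(2*(a:ℂ)-1))
  exact h3.congr (Filter.Eventually.of_forall fun x => (x_term_eq a ξ₁ j x).symm)

lemma x_term_integral (ha : 0 < a) :
    ∫ x : ℝ, Complex.exp (-(Complex.I * ξ₁ * x)) *
      (((1 - Real.tanh x ^ 2) ^ a : ℝ) : ℂ) * ((1 - ((Real.tanh x : ℝ) : ℂ))/2)^j
    = (2:ℂ)^(2*(a:ℂ)-1) *
        Complex.betaIntegral ((a:ℂ) + Complex.I*ξ₁/2 + j) ((a:ℂ) - Complex.I*ξ₁/2) := by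
  rw [MeasureTheory.integral_congr_ae (Filter.Eventually.of_forall (x_term_eq a ξ₁ j)),
    MeasureTheory.integral_const_mul]
  congr 1
  have h := integral_image_eq_integral_abs_deriv_smul MeasurableSet.univ
    fV_deriv_within fV_inj (gB ((a:ℂ) + Complex.I*ξ₁/2 + j) ((a:ℂ) - Complex.I*ξ₁/2))
  rw [fV_image, MeasureTheory.setIntegral_univ] at h
  rw [← h, Complex.betaIntegral, intervalIntegral.integral_of_le zero_le_one,
    MeasureTheory.integral_Ioc_eq_integral_Ioo]
  rfl
end X

lemma x_side {a : ℝ} (ξ₁ : ℝ) (ha : 0 < a) (k : ℕ) (M : ℂ) :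
    ∫ x : ℝ, Complex.exp (-(Complex.I * ξ₁ * x)) *
        (((1 - Real.tanh x ^ 2) ^ a : ℝ) : ℂ) * geg k M ((Real.tanh x : ℝ) : ℂ)
    = (2:ℂ)^(2*(a:ℂ)-1) * (poch (2*M) k / (k.factorial : ℂ)) *
        betaC ((a:ℂ) + Complex.I*ξ₁/2) ((a:ℂ) - Complex.I*ξ₁/2) *
        F32 k ((k:ℂ) + 2*M) ((a:ℂ) + Complex.I*ξ₁/2) (M + 1/2) (2*(a:ℂ)) := by
  set p : ℂ := (a:ℂ) + Complex.I*ξ₁/2 with hp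
  set q : ℂ := (a:ℂ) - Complex.I*ξ₁/2 with hq
  have hpre : 0 < p.re := by rw [hp, re_p]; exact ha
  have hqre : 0 < q.re := by rw [hq, re_q]; exact ha
  have hpq : p + q = 2*(a:ℂ) := by rw [hp, hq]; ring
  have h2are : 0 < (2*(a:ℂ)).re := by
    simp only [Complex.mul_re, Complex.ofReal_re, Complex.ofReal_im]
    norm_num; exact ha
  have hΓ2a : Complex.Gamma (2*(a:ℂ)) ≠ 0 := Gamma_ne_zero_of_re_pos h2are
  -- rewrite integrand as finite sum
  have key : ∀ x : ℝ,
      Complex.exp (-(Complex.I * ξ₁ * x)) *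
        (((1 - Real.tanh x ^ 2) ^ a : ℝ) : ℂ) * geg k M ((Real.tanh x : ℝ) : ℂ)
      = ∑ j ∈ Finset.range (k + 1),
          (poch (2*M) k / (k.factorial : ℂ) *
            (poch (-(k:ℂ)) j * poch ((k:ℂ) + 2*M) j / (poch (M + 1/2) j * (j.factorial : ℂ)))) *
          (Complex.exp (-(Complex.I * ξ₁ * x)) *
            (((1 - Real.tanh x ^ 2) ^ a : ℝ) : ℂ) * ((1 - ((Real.tanh x : ℝ) : ℂ))/2)^j) := by
    intro x
    rw [geg, F21, Finset.mul_sum]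
    rw [Finset.mul_sum]
    refine Finset.sum_congr rfl fun j _ => ?_
    ring
  rw [MeasureTheory.integral_congr_ae (Filter.Eventually.of_forall key),
    MeasureTheory.integral_finset_sum _ (fun j _ => (x_term_integrable ξ₁ j ha).const_mul _)]
  have hbeta : ∀ j : ℕ, Complex.betaIntegral (p + j) q
      = betaC p q * poch p j / poch (2*(a:ℂ)) j := by
    intro j
    have hure : 0 < (p + j).re := by
      rw [Complex.add_re, Complex.natCast_re]
      have : (0:ℝ) ≤ (j:ℝ) := by positivity
      linarith
    have h := Complex.Gamma_mul_Gamma_eq_betaIntegral hure hqre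
    have hsum : p + (j:ℂ) + q = 2*(a:ℂ) + j := by rw [← hpq]; ring
    rw [hsum, gamma_shift h2are j, gamma_shift hpre j] at h
    have hne : Complex.Gamma (2*(a:ℂ)) * poch (2*(a:ℂ)) j ≠ 0 :=
      mul_ne_zero hΓ2a (poch_ne_zero h2are j)
    rw [betaC, hpq]
    rw [eq_div_iff (poch_ne_zero h2are j), div_mul_eq_mul_div, eq_div_iff hΓ2a]
    linear_combination -h
  calc ∑ j ∈ Finset.range (k + 1),
        ∫ x : ℝ, (poch (2*M) k / (k.factorial : ℂ) *
            (poch (-(k:ℂ)) j * poch ((k:ℂ) + 2*M) j / (poch (M + 1/2) j * (j.factorial : ℂ)))) *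
          (Complex.exp (-(Complex.I * ξ₁ * x)) *
            (((1 - Real.tanh x ^ 2) ^ a : ℝ) : ℂ) * ((1 - ((Real.tanh x : ℝ) : ℂ))/2)^j)
      = ∑ j ∈ Finset.range (k + 1),
          (poch (2*M) k / (k.factorial : ℂ) *
            (poch (-(k:ℂ)) j * poch ((k:ℂ) + 2*M) j / (poch (M + 1/2) j * (j.factorial : ℂ)))) *
          ((2:ℂ)^(2*(a:ℂ)-1) * (betaC p q * poch p j / poch (2*(a:ℂ)) j)) := by
        refine Finset.sum_congr rfl fun j _ => ?_
        rw [MeasureTheory.integral_const_mul, x_term_integral ξ₁ j ha, ← hbeta j]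
    _ = (2:ℂ)^(2*(a:ℂ)-1) * (poch (2*M) k / (k.factorial : ℂ)) * betaC p q *
          F32 k ((k:ℂ) + 2*M) p (M + 1/2) (2*(a:ℂ)) := by
        rw [F32, Finset.mul_sum]
        refine Finset.sum_congr rfl fun j _ => ?_
        ring

/-- two-variable Fourier transform of Laguerre polynomials on the
cone (`d = 1` case). -/
theorem fourier_laguerre_cone (a b μ β : ℝ) (ha : 0 < a) (hb : 0 < b)
    (hμ : -1/2 < μ) (hβ : 0 < 2 * μ + β + 1) (n k : ℕ) (hk : k ≤ n) (ξ₁ ξ₂ : ℝ) :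
    ∫ t : ℝ, ∫ x : ℝ,
        Complex.exp (-(Complex.I * ξ₁ * x) - Complex.I * ξ₂ * t) *
        (((1 - Real.tanh x ^ 2) ^ a : ℝ) : ℂ) *
        ((Real.exp (-(Real.exp t) / 2 + (b + k) * t) : ℝ) : ℂ) *
        lag (n - k) ((2 * k + 2 * μ + β : ℝ) : ℂ) ((Real.exp t : ℝ) : ℂ) *
        geg k (μ : ℂ) ((Real.tanh x : ℝ) : ℂ)
      = 2 ^ (2 * (a : ℂ) + b + k - Complex.I * ξ₂ - 1) *
          (poch (2 * (k : ℂ) + 2 * μ + β + 1) (n - k) * poch (2 * (μ : ℂ)) k /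
            ((k.factorial : ℂ) * ((n - k).factorial : ℂ))) *
          Complex.Gamma ((b : ℂ) + k - Complex.I * ξ₂) *
          F21 (n - k) ((b : ℂ) + k - Complex.I * ξ₂) (2 * (k : ℂ) + 2 * μ + β + 1) 2 *
          betaC ((a : ℂ) + Complex.I * ξ₁ / 2) ((a : ℂ) - Complex.I * ξ₁ / 2) *
          F32 k ((k : ℂ) + 2 * μ) ((a : ℂ) + Complex.I * ξ₁ / 2) ((μ : ℂ) + 1/2)
            (2 * (a : ℂ)) := by
  set A : ℂ := ((2 * k + 2 * μ + β : ℝ) : ℂ) with hA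
  set m : ℕ := n - k with hm
  -- factor the inner integral
  have step1 : ∀ t : ℝ, (∫ x : ℝ,
      Complex.exp (-(Complex.I * ξ₁ * x) - Complex.I * ξ₂ * t) *
        (((1 - Real.tanh x ^ 2) ^ a : ℝ) : ℂ) *
        ((Real.exp (-(Real.exp t) / 2 + (b + k) * t) : ℝ) : ℂ) *
        lag m A ((Real.exp t : ℝ) : ℂ) * geg k (μ : ℂ) ((Real.tanh x : ℝ) : ℂ))
      = (Complex.exp (-(Complex.I * ξ₂ * t)) *
          ((Real.exp (-(Real.exp t) / 2 + (b + (k:ℝ)) * t) : ℝ) : ℂ) *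
          lag m A (Real.exp t)) *
        ∫ x : ℝ, Complex.exp (-(Complex.I * ξ₁ * x)) *
          (((1 - Real.tanh x ^ 2) ^ a : ℝ) : ℂ) * geg k (μ : ℂ) ((Real.tanh x : ℝ) : ℂ) := by
    intro t
    rw [← MeasureTheory.integral_const_mul]
    apply MeasureTheory.integral_congr_ae
    filter_upwards with x
    rw [show -(Complex.I * ξ₁ * x) - Complex.I * ξ₂ * t
        = (-(Complex.I * ξ₂ * t)) + (-(Complex.I * ξ₁ * x)) by ring, Complex.exp_add]
    ring
  rw [MeasureTheory.integral_congr_ae (Filter.Eventually.of_forall step1),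
    MeasureTheory.integral_mul_const,
    t_side (b + (k:ℝ)) (by positivity) ξ₂ m A, x_side ξ₁ ha k (μ:ℂ)]
  have hc : ((b + (k:ℝ) : ℝ) : ℂ) = (b:ℂ) + k := by push_cast; ring
  have hA1 : A + 1 = 2 * (k : ℂ) + 2 * μ + β + 1 := by rw [hA]; push_cast; ring
  have hpow : (2:ℂ) ^ (2 * (a : ℂ) + b + k - Complex.I * ξ₂ - 1)
      = (2:ℂ) ^ (((b + (k:ℝ) : ℝ):ℂ) - Complex.I * ξ₂) * (2:ℂ) ^ (2*(a:ℂ)-1) := by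
    rw [← Complex.cpow_add _ _ (by norm_num : (2:ℂ) ≠ 0)]
    congr 1
    push_cast
    ring
  rw [hc, hA1, hpow, hc]
  ring
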